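/- If h is a nondecreasing isotone function and ĥ is any bounded measurable function on a bounded interval J, then for every p ≥ 1 the rearranged estimate Φ(ĥ) is at least as close to h in L^p as ĥ is: ∫_J |Φ(ĥ) − h|^p ≤ ∫_J |ĥ − h|^p. -/

import Mathlib

open MeasureTheory

/-- `Ψ(f)(y) = ∫_{[a,b]} 1{f(v) ≤ y} dv`. -/
noncomputable def Psi (a b : ℝ) (f : ℝ → ℝ) (y : ℝ) : ℝ :=
  ∫ u in Set.Icc a b, Set.indicator {v : ℝ | f v ≤ y} (fun _ => (1 : ℝ)) u

/-- The increasing rearrangement `Φ(f)(u) = (Ψ f)⁻¹(u) = sup {y : Ψ(f)(y) ≤ u - a}`. -/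
noncomputable def Phi (a b : ℝ) (f : ℝ → ℝ) (u : ℝ) : ℝ :=
  sSup {y : ℝ | Psi a b f y ≤ u - a}

/-!
On `(a, b)` the rearrangement `Φ(g)` is nondecreasing, and its sublevel set `{Φ(g) ≤ t}` is an
initial interval of length `Ψ(g)(t) = |{g ≤ t}|`; so `Φ(g)` is a monotone function with the same
distribution as `g`. For monotone `f` and `H`, `{t < f} ∩ {H ≤ s}` is an upper set meeting a lower
set, so its measure is the least possible for sets of measures `|{t < f}|` and `|{H ≤ s}|`; hence it
is at most `|{t < g} ∩ {H ≤ s}|`. Integrating over `t` gives `∫ (f - H - c)₊ ≤ ∫ (g - H - c)₊`, and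
likewise for negative parts. Finally, `|x| ^ p` is a superposition of the functions `(|x| - c)₊`
with the weight `p (p - 1) c ^ (p - 2) ≥ 0`.
-/

open Set Filter Topology

theorem IsUpperSet.inter_eq_empty_or_union_eq_univ {α : Type*} [LinearOrder α] {U D : Set α}
    (hU : IsUpperSet U) (hD : IsLowerSet D) : U ∩ D = ∅ ∨ U ∪ D = univ := by
  refine or_iff_not_imp_left.2 fun hne => eq_univ_of_forall fun y => ?_
  obtain ⟨x, hxU, hxD⟩ := nonempty_iff_ne_empty.2 hne
  rcases le_total x y with hxy | hyx
  · exact Or.inl (hU hxy hxU)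
  · exact Or.inr (hD hyx hxD)

theorem integral_sub_mul_rpow {p R : ℝ} (hp : 1 < p) (hR : 0 ≤ R) :
    ∫ c in (0 : ℝ)..R, (R - c) * (p * (p - 1) * c ^ (p - 2)) = R ^ p := by
  have hc : ∀ c ∈ uIcc 0 R, (R - c) * (p * (p - 1) * c ^ (p - 2))
      = p * (p - 1) * R * c ^ (p - 2) - p * (p - 1) * c ^ (p - 1) := fun c hc => by
    have h0 : 0 ≤ c := by rw [uIcc_of_le hR] at hc; exact hc.1
    rw [show p - 1 = 1 + (p - 2) by ring, Real.rpow_one_add' h0 (by linarith)]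
    ring
  have hint : ∀ r : ℝ, -1 < r → IntervalIntegrable (fun c : ℝ => c ^ r) volume 0 R :=
    fun r hr => intervalIntegral.intervalIntegrable_rpow' hr
  have hpow : ∀ q : ℝ, 0 < q → ∫ c in (0 : ℝ)..R, c ^ (q - 1) = R ^ q / q := fun q hq => by
    rw [integral_rpow (Or.inl (by linarith)), sub_add_cancel, Real.zero_rpow hq.ne', sub_zero]
  have hRp : R * R ^ (p - 1) = R ^ p := by
    rw [← Real.rpow_one_add' hR (by linarith), add_sub_cancel]
  rw [intervalIntegral.integral_congr hc, intervalIntegral.integral_sub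
    ((hint _ (by linarith)).const_mul _) ((hint _ (by linarith)).const_mul _),
    intervalIntegral.integral_const_mul, intervalIntegral.integral_const_mul,
    show p - 2 = (p - 1) - 1 by ring, hpow p (by linarith), hpow (p - 1) (by linarith)]
  have hp0 : p ≠ 0 := by linarith
  have hp1 : p - 1 ≠ 0 := by linarith
  field_simp
  linear_combination p * hRp

/-- Taylor's formula for `c ^ p` at `0`, with integral remainder over `c > 0`. -/
theorem ofReal_rpow_eq_lintegral {p R : ℝ} (hp : 1 < p) (hR : 0 ≤ R) :
    ENNReal.ofReal (R ^ p) = ∫⁻ c in Ioi 0,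
      ENNReal.ofReal (R - c) * ENNReal.ofReal (p * (p - 1) * c ^ (p - 2)) := by
  have hw : ∀ c ∈ Ioi (0 : ℝ), 0 ≤ p * (p - 1) * c ^ (p - 2) := fun c hc =>
    mul_nonneg (mul_nonneg (by linarith) (by linarith)) (Real.rpow_nonneg (le_of_lt hc) _)
  have hint : IntegrableOn (fun c => (R - c) * (p * (p - 1) * c ^ (p - 2))) (Ioc 0 R) := by
    refine (intervalIntegrable_iff_integrableOn_Ioc_of_le hR).1 ?_
    exact (((intervalIntegral.intervalIntegrable_rpow' (by linarith)).const_mul _)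
      |>.continuousOn_mul (continuousOn_const.sub continuousOn_id))
  rw [← integral_sub_mul_rpow hp hR, intervalIntegral.integral_of_le hR,
    ofReal_integral_eq_lintegral_ofReal hint
      ((ae_restrict_mem measurableSet_Ioc).mono fun c hc =>
        mul_nonneg (sub_nonneg.2 hc.2) (hw c hc.1)),
    ← Ioc_union_Ioi_eq_Ioi hR, lintegral_union measurableSet_Ioi (Ioc_disjoint_Ioi le_rfl)]
  have hzero : ∫⁻ c in Ioi R,
      ENNReal.ofReal (R - c) * ENNReal.ofReal (p * (p - 1) * c ^ (p - 2)) = 0 :=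
    setLIntegral_eq_zero measurableSet_Ioi fun c hc => by
      simp only [Pi.zero_apply]
      rw [ENNReal.ofReal_of_nonpos (sub_nonpos.2 (le_of_lt hc)), zero_mul]
  rw [hzero, add_zero]
  exact setLIntegral_congr_fun measurableSet_Ioc fun c hc =>
    ENNReal.ofReal_mul' (hw c hc.1)

theorem ENNReal.ofReal_abs_sub_sub {x y c : ℝ} (hc : 0 ≤ c) :
    ENNReal.ofReal (|x - y| - c) = ENNReal.ofReal (x - (y + c)) + ENNReal.ofReal (y - c - x) := by
  rcases le_total x y with hxy | hxy
  · rw [abs_of_nonpos (sub_nonpos.2 hxy), ENNReal.ofReal_of_nonpos (p := x - (y + c)) (by linarith),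
      zero_add]
    ring_nf
  · rw [abs_of_nonneg (sub_nonneg.2 hxy), ENNReal.ofReal_of_nonpos (p := y - c - x) (by linarith),
      add_zero]
    ring_nf

section Measure

variable {α : Type*} [MeasurableSpace α] {μ : Measure α}

/-- If `U ∪ D` is everything, `μ (U ∩ D) = μ U + μ D - μ univ`, while
`μ (X ∩ D) ≥ μ X + μ D - μ univ` for every `X`. -/
theorem measure_inter_le_measure_inter [IsFiniteMeasure μ] {U D X : Set α}
    (hUD : U ∩ D = ∅ ∨ U ∪ D = univ) (hD : MeasurableSet D) (hUX : μ U ≤ μ X) :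
    μ (U ∩ D) ≤ μ (X ∩ D) := by
  rcases hUD with hUD | hUD
  · simp [hUD]
  refine ENNReal.le_of_add_le_add_right (measure_ne_top μ univ) ?_
  calc μ (U ∩ D) + μ univ = μ U + μ D := by
        rw [← hUD, add_comm, measure_union_add_inter U hD]
    _ ≤ μ X + μ D := by gcongr
    _ = μ (X ∪ D) + μ (X ∩ D) := (measure_union_add_inter X hD).symm
    _ ≤ μ (X ∩ D) + μ univ := by rw [add_comm]; gcongr; exact subset_univ _

theorem lintegral_ofReal_sub_eq [SFinite μ] {f₁ f₂ : α → ℝ} (h₁ : Measurable f₁)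
    (h₂ : Measurable f₂) :
    ∫⁻ x, ENNReal.ofReal (f₁ x - f₂ x) ∂μ = ∫⁻ t, μ ({x | t < f₁ x} ∩ {x | f₂ x ≤ t}) := by
  set E := {q : α × ℝ | q.2 < f₁ q.1 ∧ f₂ q.1 ≤ q.2}
  have hE : MeasurableSet E :=
    (measurableSet_lt measurable_snd (h₁.comp measurable_fst)).inter
      (measurableSet_le (h₂.comp measurable_fst) measurable_snd)
  calc ∫⁻ x, ENNReal.ofReal (f₁ x - f₂ x) ∂μ = ∫⁻ x, volume (Prod.mk x ⁻¹' E) ∂μ := by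
        refine lintegral_congr fun x => ?_
        rw [← Real.volume_Ico]
        congr 1
        ext t
        exact and_comm
    _ = ∫⁻ t, μ ({x | t < f₁ x} ∩ {x | f₂ x ≤ t}) := by
        rw [← Measure.prod_apply hE, Measure.prod_apply_symm hE]
        rfl

theorem lintegral_ofReal_rpow_eq [SFinite μ] {p : ℝ} (hp : 1 < p) {φ : α → ℝ}
    (hφ : Measurable φ) (hφ0 : ∀ x, 0 ≤ φ x) :
    ∫⁻ x, ENNReal.ofReal (φ x ^ p) ∂μ = ∫⁻ c in Ioi 0,
      (∫⁻ x, ENNReal.ofReal (φ x - c) ∂μ) * ENNReal.ofReal (p * (p - 1) * c ^ (p - 2)) := by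
  simp_rw [ofReal_rpow_eq_lintegral hp (hφ0 _)]
  rw [lintegral_lintegral_swap (by fun_prop)]
  exact lintegral_congr fun c => lintegral_mul_const _ (by fun_prop)

end Measure

section Contraction

variable {α : Type*} [LinearOrder α] [MeasurableSpace α] {μ : Measure α} [IsFiniteMeasure μ]
  {f g H : α → ℝ}

theorem lintegral_posPart_le_of_map_eq (hf : Monotone f) (hH : Monotone H)
    (hfm : Measurable f) (hgm : Measurable g) (hHm : Measurable H) (hfg : μ.map f = μ.map g) :
    ∫⁻ x, ENNReal.ofReal (f x - H x) ∂μ ≤ ∫⁻ x, ENNReal.ofReal (g x - H x) ∂μ := by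
  rw [lintegral_ofReal_sub_eq hfm hHm, lintegral_ofReal_sub_eq hgm hHm]
  refine lintegral_mono fun t => measure_inter_le_measure_inter ?_
    (measurableSet_le hHm measurable_const) ?_
  · exact IsUpperSet.inter_eq_empty_or_union_eq_univ (fun x y hxy hx => hx.trans_le (hf hxy))
      fun x y hxy hx => (hH hxy).trans hx
  · exact (ProbabilityTheory.IdentDistrib.measure_mem_eq
      ⟨hfm.aemeasurable, hgm.aemeasurable, hfg⟩ measurableSet_Ioi).le

theorem lintegral_negPart_le_of_map_eq (hf : Monotone f) (hH : Monotone H)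
    (hfm : Measurable f) (hgm : Measurable g) (hHm : Measurable H) (hfg : μ.map f = μ.map g) :
    ∫⁻ x, ENNReal.ofReal (H x - f x) ∂μ ≤ ∫⁻ x, ENNReal.ofReal (H x - g x) ∂μ := by
  rw [lintegral_ofReal_sub_eq hHm hfm, lintegral_ofReal_sub_eq hHm hgm]
  refine lintegral_mono fun t => ?_
  simp only [inter_comm {x | t < H x}]
  refine measure_inter_le_measure_inter ?_ (measurableSet_lt measurable_const hHm) ?_
  · rw [inter_comm, union_comm]
    exact IsUpperSet.inter_eq_empty_or_union_eq_univ (fun x y hxy hx => hx.trans_le (hH hxy))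
      fun x y hxy hx => (hf hxy).trans hx
  · exact (ProbabilityTheory.IdentDistrib.measure_mem_eq
      ⟨hfm.aemeasurable, hgm.aemeasurable, hfg⟩ measurableSet_Iic).le

theorem lintegral_ofReal_abs_sub_sub_le_of_map_eq (hf : Monotone f) (hH : Monotone H)
    (hfm : Measurable f) (hgm : Measurable g) (hHm : Measurable H) (hfg : μ.map f = μ.map g)
    {c : ℝ} (hc : 0 ≤ c) :
    ∫⁻ x, ENNReal.ofReal (|f x - H x| - c) ∂μ ≤ ∫⁻ x, ENNReal.ofReal (|g x - H x| - c) ∂μ := by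
  have hHc : Monotone fun x => H x + c := fun x y hxy => by simpa using hH hxy
  have hHc' : Monotone fun x => H x - c := fun x y hxy => by simpa using hH hxy
  simp only [ENNReal.ofReal_abs_sub_sub hc]
  rw [lintegral_add_left (by fun_prop), lintegral_add_left (by fun_prop)]
  exact add_le_add
    (lintegral_posPart_le_of_map_eq hf hHc hfm hgm (hHm.add_const c) hfg)
    (lintegral_negPart_le_of_map_eq hf hHc' hfm hgm (hHm.sub_const c) hfg)

theorem lintegral_rpow_abs_sub_le_of_map_eq (hf : Monotone f) (hH : Monotone H)
    (hfm : Measurable f) (hgm : Measurable g) (hHm : Measurable H) (hfg : μ.map f = μ.map g)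
    {p : ℝ} (hp : 1 ≤ p) :
    ∫⁻ x, ENNReal.ofReal (|f x - H x| ^ p) ∂μ ≤ ∫⁻ x, ENNReal.ofReal (|g x - H x| ^ p) ∂μ := by
  rcases hp.eq_or_lt with rfl | hp
  · simpa using lintegral_ofReal_abs_sub_sub_le_of_map_eq hf hH hfm hgm hHm hfg le_rfl
  rw [lintegral_ofReal_rpow_eq hp (by fun_prop) fun _ => abs_nonneg _,
    lintegral_ofReal_rpow_eq hp (by fun_prop) fun _ => abs_nonneg _]
  refine setLIntegral_mono' measurableSet_Ioi fun c hc => ?_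
  gcongr ?_ * _
  exact lintegral_ofReal_abs_sub_sub_le_of_map_eq hf hH hfm hgm hHm hfg (le_of_lt hc)

theorem integral_rpow_abs_sub_le_of_map_eq (hf : Monotone f) (hH : Monotone H)
    (hfm : Measurable f) (hgm : Measurable g) (hHm : Measurable H) (hfg : μ.map f = μ.map g)
    {p : ℝ} (hp : 1 ≤ p) (hint : Integrable (fun x => |g x - H x| ^ p) μ) :
    ∫ x, |f x - H x| ^ p ∂μ ≤ ∫ x, |g x - H x| ^ p ∂μ := by
  have hm {φ : α → ℝ} (hφ : Measurable φ) :
      AEStronglyMeasurable (fun x => |φ x - H x| ^ p) μ :=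
    ((hφ.sub hHm).abs.pow_const p).aestronglyMeasurable
  rw [integral_eq_lintegral_of_nonneg_ae (.of_forall fun _ => by positivity) (hm hfm),
    integral_eq_lintegral_of_nonneg_ae (.of_forall fun _ => by positivity) (hm hgm)]
  exact ENNReal.toReal_mono hint.lintegral_lt_top.ne
    (lintegral_rpow_abs_sub_le_of_map_eq hf hH hfm hgm hHm hfg hp)

end Contraction

section Rearrangement

variable {a b C : ℝ} {g : ℝ → ℝ}

theorem Psi_eq_measureReal (hg : Measurable g) (y : ℝ) :
    Psi a b g y = (volume.restrict (Icc a b)).real {v | g v ≤ y} := by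
  rw [Psi, integral_indicator_const _ (measurableSet_le hg measurable_const), smul_eq_mul, mul_one]

theorem Psi_mono (hg : Measurable g) : Monotone (Psi a b g) := fun s t hst => by
  simp only [Psi_eq_measureReal hg]
  exact measureReal_mono fun v hv => le_trans hv hst

theorem Psi_eq_zero (hg : Measurable g) (hbdd : ∀ u ∈ Icc a b, |g u| ≤ C) {y : ℝ} (hy : y < -C) :
    Psi a b g y = 0 := by
  have : {v | g v ≤ y} ∩ Icc a b = ∅ :=
    eq_empty_of_forall_notMem fun v ⟨hv, hvJ⟩ => by
      have hv : g v ≤ y := hv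
      linarith [neg_abs_le (g v), hbdd v hvJ]
  rw [Psi_eq_measureReal hg, measureReal_restrict_apply' measurableSet_Icc, this, measureReal_empty]

theorem Psi_eq_sub (hg : Measurable g) (hbdd : ∀ u ∈ Icc a b, |g u| ≤ C) (hab : a ≤ b) {y : ℝ}
    (hy : C ≤ y) : Psi a b g y = b - a := by
  have : {v | g v ≤ y} ∩ Icc a b = Icc a b :=
    inter_eq_right.2 fun v hv => ((le_abs_self _).trans (hbdd v hv)).trans hy
  rw [Psi_eq_measureReal hg, measureReal_restrict_apply' measurableSet_Icc, this,
    Real.volume_real_Icc_of_le hab]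

theorem tendsto_Psi_nhdsGT (hg : Measurable g) (t : ℝ) :
    Tendsto (Psi a b g) (𝓝[>] t) (𝓝 (Psi a b g t)) := by
  have hμ := tendsto_measure_biInter_gt (μ := volume.restrict (Icc a b))
    (s := fun r => {v | g v ≤ r}) (a := t)
    (fun r _ => (measurableSet_le hg measurable_const).nullMeasurableSet)
    (fun _ _ _ hij _ hv => le_trans hv hij) ⟨t + 1, by linarith, measure_ne_top _ _⟩
  have hinter : ⋂ r > t, {v | g v ≤ r} = {v | g v ≤ t} := by
    ext v
    simpa using ⟨le_of_forall_gt_imp_ge_of_dense, fun h r hr => h.trans hr.le⟩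
  rw [hinter] at hμ
  simp only [funext (Psi_eq_measureReal (a := a) (b := b) hg), measureReal_def]
  exact (ENNReal.tendsto_toReal (measure_ne_top _ _)).comp hμ

theorem Phi_le_of_lt_Psi (hg : Measurable g) (hbdd : ∀ u ∈ Icc a b, |g u| ≤ C) {u t : ℝ}
    (hu : a ≤ u) (ht : u - a < Psi a b g t) : Phi a b g u ≤ t := by
  refine csSup_le ⟨-C - 1, ?_⟩ fun y hy => ?_
  · show Psi a b g (-C - 1) ≤ u - a
    rw [Psi_eq_zero hg hbdd (by linarith)]
    linarith
  · by_contra! hty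
    exact (ht.trans_le ((Psi_mono hg hty.le).trans hy)).false

theorem le_Psi_of_Phi_le (hg : Measurable g) (hbdd : ∀ u ∈ Icc a b, |g u| ≤ C) {u t : ℝ}
    (hu : u ∈ Ico a b) (ht : Phi a b g u ≤ t) : u - a ≤ Psi a b g t := by
  by_contra! hlt
  obtain ⟨y, hy, hty⟩ :=
    (((tendsto_Psi_nhdsGT hg t).eventually (gt_mem_nhds hlt)).and self_mem_nhdsWithin).exists
  have hbddAbove : BddAbove {y | Psi a b g y ≤ u - a} := ⟨C, fun y hy => by
    by_contra! hCy
    have hy : Psi a b g y ≤ u - a := hy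
    rw [Psi_eq_sub hg hbdd (hu.1.trans hu.2.le) hCy.le] at hy
    linarith [hu.2]⟩
  exact (hty.trans_le ((le_csSup hbddAbove hy.le).trans ht)).false

theorem monotoneOn_Phi (hg : Measurable g) (hbdd : ∀ u ∈ Icc a b, |g u| ≤ C) :
    MonotoneOn (Phi a b g) (Ico a b) := fun u hu v hv huv => by
  rcases huv.lt_or_eq with huv | rfl
  · exact Phi_le_of_lt_Psi hg hbdd hu.1 ((sub_lt_sub_right huv a).trans_le
      (le_Psi_of_Phi_le hg hbdd hv le_rfl))
  · rfl

theorem Phi_mem_Icc (hg : Measurable g) (hbdd : ∀ u ∈ Icc a b, |g u| ≤ C) {u : ℝ}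
    (hu : u ∈ Ioo a b) : Phi a b g u ∈ Icc (-C) C := by
  refine ⟨le_of_not_gt fun hlt => ?_, Phi_le_of_lt_Psi hg hbdd hu.1.le ?_⟩
  · have := le_Psi_of_Phi_le hg hbdd (Ioo_subset_Ico_self hu) le_rfl
    rw [Psi_eq_zero hg hbdd hlt] at this
    linarith [hu.1]
  · rw [Psi_eq_sub hg hbdd (hu.1.trans hu.2).le le_rfl]
    linarith [hu.2]

theorem volume_setOf_Phi_le (hg : Measurable g) (hbdd : ∀ u ∈ Icc a b, |g u| ≤ C) (hab : a ≤ b)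
    (t : ℝ) :
    volume.restrict (Ioo a b) {u | Phi a b g u ≤ t} = ENNReal.ofReal (Psi a b g t) := by
  have hPsi : Psi a b g t ≤ b - a :=
    (Psi_mono hg (le_max_left t C)).trans (Psi_eq_sub hg hbdd hab (le_max_right t C)).le
  rw [Measure.restrict_apply' measurableSet_Ioo]
  refine le_antisymm ?_ ?_
  · calc volume ({u | Phi a b g u ≤ t} ∩ Ioo a b) ≤ volume (Ioc a (a + Psi a b g t)) :=
          measure_mono fun u ⟨hu, huJ⟩ =>
            ⟨huJ.1, by linarith [le_Psi_of_Phi_le hg hbdd (Ioo_subset_Ico_self huJ) hu]⟩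
      _ = ENNReal.ofReal (Psi a b g t) := by rw [Real.volume_Ioc, add_sub_cancel_left]
  · calc ENNReal.ofReal (Psi a b g t) = volume (Ioo a (a + Psi a b g t)) := by
          rw [Real.volume_Ioo, add_sub_cancel_left]
      _ ≤ volume ({u | Phi a b g u ≤ t} ∩ Ioo a b) :=
          measure_mono fun u hu =>
            ⟨Phi_le_of_lt_Psi hg hbdd hu.1.le (by linarith [hu.2]), hu.1, by linarith [hu.2]⟩

theorem ofReal_Psi (hg : Measurable g) (t : ℝ) :
    ENNReal.ofReal (Psi a b g t) = volume.restrict (Ioo a b) {v | g v ≤ t} := by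
  rw [Psi_eq_measureReal hg, measureReal_def, ENNReal.ofReal_toReal (measure_ne_top _ _),
    Measure.restrict_congr_set Ioo_ae_eq_Icc]

theorem map_restrict_Ioo_eq_of_eqOn_Phi (hg : Measurable g) (hbdd : ∀ u ∈ Icc a b, |g u| ≤ C)
    (hab : a ≤ b) {f : ℝ → ℝ} (hf : Measurable f) (hfΦ : EqOn (Phi a b g) f (Ioo a b)) :
    (volume.restrict (Ioo a b)).map f = (volume.restrict (Ioo a b)).map g := by
  refine Measure.ext_of_Iic _ _ fun t => ?_
  rw [Measure.map_apply hf measurableSet_Iic, Measure.map_apply hg measurableSet_Iic]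
  change _ = volume.restrict (Ioo a b) {v | g v ≤ t}
  rw [← ofReal_Psi hg, ← volume_setOf_Phi_le hg hbdd hab]
  refine measure_congr ((ae_restrict_mem measurableSet_Ioo).mono fun u hu => ?_)
  change (f u ≤ t) = (Phi a b g u ≤ t)
  rw [hfΦ hu]

end Rearrangement

theorem rearranged_estimate_closer_general (a b : ℝ) (h g : ℝ → ℝ)
    (hmono : MonotoneOn h (Set.Icc a b))
    (hmeas : Measurable g) (C : ℝ) (hbdd : ∀ u ∈ Set.Icc a b, |g u| ≤ C)
    (p : ℝ) (hp : 1 ≤ p) :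
    ∫ u in Set.Icc a b, |Phi a b g u - h u| ^ p
      ≤ ∫ u in Set.Icc a b, |g u - h u| ^ p := by
  rcases le_or_gt b a with hba | hab
  · have : volume (Icc a b) = 0 := by rw [Real.volume_Icc, ENNReal.ofReal_eq_zero]; linarith
    simp [Measure.restrict_eq_zero.2 this]
  obtain ⟨f, hf, hfΦ⟩ :=
    ((monotoneOn_Phi hmeas hbdd).mono Ioo_subset_Ico_self).exists_monotone_extension
      ⟨-C, forall_mem_image.2 fun u hu => (Phi_mem_Icc hmeas hbdd hu).1⟩
      ⟨C, forall_mem_image.2 fun u hu => (Phi_mem_Icc hmeas hbdd hu).2⟩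
  have ha : a ∈ Icc a b := left_mem_Icc.2 hab.le
  have hb : b ∈ Icc a b := right_mem_Icc.2 hab.le
  obtain ⟨H, hH, hHh⟩ := hmono.exists_monotone_extension
    ⟨h a, forall_mem_image.2 fun u hu => hmono ha hu hu.1⟩
    ⟨h b, forall_mem_image.2 fun u hu => hmono hu hb hu.2⟩
  have hint : IntegrableOn (fun u => |g u - H u| ^ p) (Ioo a b) := by
    refine Integrable.of_bound ((hmeas.sub hH.measurable).abs.pow_const p).aestronglyMeasurable
      ((C + max |h a| |h b|) ^ p) ((ae_restrict_mem measurableSet_Ioo).mono fun u hu => ?_)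
    have hu' := Ioo_subset_Icc_self hu
    rw [Real.norm_of_nonneg (by positivity), ← hHh hu']
    gcongr
    exact (abs_sub _ _).trans (add_le_add (hbdd u hu')
      (abs_le_max_abs_abs (hmono ha hu' hu'.1) (hmono hu' hb hu'.2)))
  rw [integral_Icc_eq_integral_Ioo, integral_Icc_eq_integral_Ioo]
  calc ∫ u in Ioo a b, |Phi a b g u - h u| ^ p = ∫ u in Ioo a b, |f u - H u| ^ p :=
        setIntegral_congr_fun measurableSet_Ioo fun u hu => by
          rw [hfΦ hu, hHh (Ioo_subset_Icc_self hu)]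
    _ ≤ ∫ u in Ioo a b, |g u - H u| ^ p :=
        integral_rpow_abs_sub_le_of_map_eq hf hH hf.measurable hmeas hH.measurable
          (map_restrict_Ioo_eq_of_eqOn_Phi hmeas hbdd hab.le hf.measurable hfΦ) hp hint
    _ = ∫ u in Ioo a b, |g u - h u| ^ p :=
        setIntegral_congr_fun measurableSet_Ioo fun u hu => by rw [hHh (Ioo_subset_Icc_self hu)]

/-- If `h` is nondecreasing (isotone) and right-continuous on `J = [a,b]` and `g` is any
bounded measurable function, then for every `p ≥ 1` the rearranged estimate `Φ(g)` is at
least as close to `h` in `L^p` as `g` is: `∫_J |Φ(g) − h|^p ≤ ∫_J |g − h|^p`. -/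
theorem rearranged_estimate_closer (a b : ℝ) (hab : a ≤ b) (h g : ℝ → ℝ)
    (hmono : MonotoneOn h (Set.Icc a b))
    (hrc : ∀ x ∈ Set.Icc a b, ContinuousWithinAt h (Set.Ici x) x)
    (hmeas : Measurable g) (C : ℝ) (hbdd : ∀ u ∈ Set.Icc a b, |g u| ≤ C)
    (p : ℝ) (hp : 1 ≤ p) :
    ∫ u in Set.Icc a b, |Phi a b g u - h u| ^ p
      ≤ ∫ u in Set.Icc a b, |g u - h u| ^ p :=
  rearranged_estimate_closer_general a b h g hmono hmeas C hbdd p hp
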